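/- Let $U_1 \in \mathbb{R}^{m \times n_1}$ and $U_2 \in \mathbb{R}^{m \times n_2}$, let $L_1$ and $L_2$ be symmetric positive definite matrices of sizes $n_1 \times n_1$ and $n_2 \times n_2$, let $\gamma > 0$, and set $S_1 = U_1 L_1^{-1} U_1^\top + \gamma I_m$ and $S_2 = U_2 L_2^{-1} U_2^\top + \gamma I_m$. Let $W \subseteq \mathbb{R}^m$ be the span of all columns of $U_1$ and of $U_2$, let $\xi_1, \ldots, \xi_p$ be an orthonormal basis of $W$, and define the $p \times p$ matrices $\bar{S}_1, \bar{S}_2$ by $[\bar{S}_k]_{ij} = \xi_i^\top S_k \xi_j$. Then $\det\big((\tfrac{1}{2}S_1^{-1} + \tfrac{1}{2}S_2^{-1})^{-1}\big)^{1/2} \big/ \big(\det(S_1)^{1/4}\det(S_2)^{1/4}\big) = \det\big((\tfrac{1}{2}\bar{S}_1^{-1} + \tfrac{1}{2}\bar{S}_2^{-1})^{-1}\big)^{1/2} \big/ \big(\det(\bar{S}_1)^{1/4}\det(\bar{S}_2)^{1/4}\big)$. -/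

import Mathlib

/-!
Extend `ξ` to an orthonormal basis `b` of `ℝᵐ`. The new basis vectors are orthogonal to `W`,
hence to every column of `Uₖ`, so `Sₖ` acts on them as multiplication by `γ`: in the basis `b`,
`Sₖ` becomes the block-diagonal matrix `diag(S̄ₖ, γ I)`. The kernel is built from inverses, sums,
scalar multiples and determinants, so it is invariant under this orthogonal change of basis, and
it is multiplicative over block-diagonal pairs; the block pair `(γ I, γ I)` contributes `1`.
-/

open Matrix

/-- The Laplacian graph kernel value between two (positive definite) matrices. -/
noncomputable def lgKernel {k : Type*} [Fintype k] [DecidableEq k]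
    (A B : Matrix k k ℝ) : ℝ :=
  (((1 / 2 : ℝ) • A⁻¹ + (1 / 2 : ℝ) • B⁻¹)⁻¹).det ^ ((1 : ℝ) / 2) /
    (A.det ^ ((1 : ℝ) / 4) * B.det ^ ((1 : ℝ) / 4))

theorem MulEquiv.map_ringInverse {M N : Type*} [MonoidWithZero M] [MonoidWithZero N]
    (f : M ≃* N) (a : M) : f (Ring.inverse a) = Ring.inverse (f a) := by
  by_cases ha : IsUnit a
  · obtain ⟨u, rfl⟩ := ha
    simpa using (Ring.inverse_unit (Units.map f.toMonoidHom u)).symm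
  · rw [Ring.inverse_non_unit a ha, Ring.inverse_non_unit _ (by rwa [MulEquiv.isUnit_map]),
      map_zero]

section Kernel

variable {k l : Type*} [Fintype k] [DecidableEq k] [Fintype l] [DecidableEq l]

theorem Matrix.map_nonsing_inv {R : Type*} [CommRing R]
    (f : Matrix k k R ≃* Matrix l l R) (A : Matrix k k R) : f A⁻¹ = (f A)⁻¹ := by
  simp only [nonsing_inv_eq_ringInverse, f.map_ringInverse]

theorem Matrix.inv_fromBlocks_zero_zero {R : Type*} [CommRing R] {A : Matrix k k R}
    {D : Matrix l l R} (hA : IsUnit A) (hD : IsUnit D) :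
    (fromBlocks A 0 0 D)⁻¹ = fromBlocks A⁻¹ 0 0 D⁻¹ := by
  simp [inv_fromBlocks_zero₂₁_of_isUnit_iff A 0 D (iff_of_true hA hD)]

theorem Matrix.PosDef.half_smul_inv_add_half_smul_inv {A B : Matrix k k ℝ} (hA : A.PosDef)
    (hB : B.PosDef) : ((1 / 2 : ℝ) • A⁻¹ + (1 / 2 : ℝ) • B⁻¹).PosDef :=
  (hA.inv.smul (by norm_num)).add (hB.inv.smul (by norm_num))

theorem lgKernel_map (f : Matrix k k ℝ ≃ₐ[ℝ] Matrix l l ℝ) (hf : ∀ A, (f A).det = A.det)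
    (A B : Matrix k k ℝ) : lgKernel (f A) (f B) = lgKernel A B := by
  have hinv (A : Matrix k k ℝ) : f A⁻¹ = (f A)⁻¹ := map_nonsing_inv f.toMulEquiv A
  simp only [lgKernel, ← hinv, ← map_smul, ← map_add, hf]

theorem lgKernel_fromBlocks {A B : Matrix k k ℝ} {D E : Matrix l l ℝ} (hA : A.PosDef)
    (hB : B.PosDef) (hD : D.PosDef) (hE : E.PosDef) :
    lgKernel (fromBlocks A 0 0 D) (fromBlocks B 0 0 E) = lgKernel A B * lgKernel D E := by
  have hAB := hA.half_smul_inv_add_half_smul_inv hB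
  have hDE := hD.half_smul_inv_add_half_smul_inv hE
  have hmean : (1 / 2 : ℝ) • fromBlocks A⁻¹ 0 0 D⁻¹ + (1 / 2 : ℝ) • fromBlocks B⁻¹ 0 0 E⁻¹ =
      fromBlocks ((1 / 2 : ℝ) • A⁻¹ + (1 / 2 : ℝ) • B⁻¹) 0 0
        ((1 / 2 : ℝ) • D⁻¹ + (1 / 2 : ℝ) • E⁻¹) := by
    simp [fromBlocks_smul, fromBlocks_add]
  simp only [lgKernel]
  rw [inv_fromBlocks_zero_zero hA.isUnit hD.isUnit, inv_fromBlocks_zero_zero hB.isUnit hE.isUnit,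
    hmean, inv_fromBlocks_zero_zero hAB.isUnit hDE.isUnit]
  simp only [det_fromBlocks_zero₂₁]
  rw [Real.mul_rpow hAB.inv.det_pos.le hDE.inv.det_pos.le,
    Real.mul_rpow hA.det_pos.le hD.det_pos.le, Real.mul_rpow hB.det_pos.le hE.det_pos.le]
  ring

theorem lgKernel_self {A : Matrix k k ℝ} (hA : 0 < A.det) : lgKernel A A = 1 := by
  have hhalf : A.det ^ ((1 : ℝ) / 4) * A.det ^ ((1 : ℝ) / 4) = A.det ^ ((1 : ℝ) / 2) := by
    rw [← Real.rpow_add hA]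
    norm_num
  rw [lgKernel, ← add_smul, add_halves, one_smul, nonsing_inv_nonsing_inv A hA.ne'.isUnit, hhalf,
    div_self (Real.rpow_pos_of_pos hA _).ne']

end Kernel

section ColumnSpace

variable {n r : Type*} [Fintype n]

theorem Matrix.transpose_mulVec_eq_zero_of_col_mem_span {R : Type*} [CommRing R]
    {U : Matrix n r R} {s : Set (n → R)} (hU : ∀ a, U.col a ∈ Submodule.span R s)
    {v : n → R} (hv : ∀ u ∈ s, u ⬝ᵥ v = 0) : Uᵀ *ᵥ v = 0 := by
  have hspan : Submodule.span R s ≤ LinearMap.ker ((dotProductBilin R R).flip v) :=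
    Submodule.span_le.mpr fun u hu => hv u hu
  ext a
  rw [mulVec_transpose]
  exact (dotProduct_comm _ _).trans (hspan (hU a))

variable [Fintype r]

theorem Matrix.mul_mul_transpose_add_smul_one_mulVec [DecidableEq n] {R : Type*} [CommRing R]
    {U : Matrix n r R} (M : Matrix r r R) (γ : R) {v : n → R} (hv : Uᵀ *ᵥ v = 0) :
    (U * M * Uᵀ + γ • 1) *ᵥ v = γ • v := by
  rw [add_mulVec, ← mulVec_mulVec, hv, mulVec_zero, zero_add, smul_mulVec, one_mulVec]

theorem Matrix.PosDef.mul_inv_mul_transpose_add_smul_one [DecidableEq n] [DecidableEq r]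
    {L : Matrix r r ℝ} (hL : L.PosDef) (U : Matrix n r ℝ) {γ : ℝ} (hγ : 0 < γ) :
    (U * L⁻¹ * Uᵀ + γ • 1).PosDef :=
  PosDef.posSemidef_add (by simpa using hL.inv.posSemidef.mul_mul_conjTranspose_same U)
    (PosDef.one.smul hγ)

theorem Matrix.PosDef.dotProduct_mulVec_of_linearIndependent {ι : Type*} [Fintype ι]
    {S : Matrix n n ℝ} (hS : S.PosDef) {v : ι → n → ℝ} (hv : LinearIndependent ℝ v) :
    (of fun i j => v i ⬝ᵥ S *ᵥ v j).PosDef := by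
  convert hS.conjTranspose_mul_mul_same (B := (of v)ᵀ) (mulVec_injective_iff.mpr hv) using 1
  ext i j
  rw [of_apply, dotProduct_mulVec]
  simp [vecMul, mul_apply, dotProduct]

end ColumnSpace

theorem EuclideanSpace.orthonormal_iff_dotProduct {ι n : Type*} [DecidableEq ι] [Fintype n]
    {v : ι → EuclideanSpace ℝ n} :
    Orthonormal ℝ v ↔ ∀ i j, v i ⬝ᵥ v j = if i = j then 1 else 0 := by
  simp only [orthonormal_iff_ite, EuclideanSpace.inner_eq_star_dotProduct, star_trivial]
  exact forall_congr' fun i => forall_congr' fun j => by rw [dotProduct_comm]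

theorem Orthonormal.exists_orthonormalBasis_sum_extension {𝕜 E ι : Type*} [RCLike 𝕜]
    [NormedAddCommGroup E] [InnerProductSpace 𝕜 E] [FiniteDimensional 𝕜 E] [Fintype ι]
    {v : ι → E} (hv : Orthonormal 𝕜 v) :
    ∃ b : OrthonormalBasis (ι ⊕ Fin (Module.finrank 𝕜 E - Fintype.card ι)) 𝕜 E,
      ∀ i, b (.inl i) = v i := by
  have hcard : Module.finrank 𝕜 E =
      Fintype.card (ι ⊕ Fin (Module.finrank 𝕜 E - Fintype.card ι)) := by
    have := hv.linearIndependent.fintype_card_le_finrank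
    simp only [Fintype.card_sum, Fintype.card_fin]
    omega
  have hrestrict : (Set.range Sum.inl).domRestrict (Sum.elim v 0) =
      v ∘ Equiv.Set.rangeInl ι (Fin (Module.finrank 𝕜 E - Fintype.card ι)) := by
    ext ⟨_, i, rfl⟩
    rfl
  obtain ⟨b, hb⟩ := Orthonormal.exists_orthonormalBasis_extension_of_card_eq hcard
    (hrestrict ▸ hv.comp _ (Equiv.injective _))
  exact ⟨b, fun i => hb _ ⟨i, rfl⟩⟩

namespace OrthonormalBasis

variable {ι n : Type*} [Fintype ι] [DecidableEq ι] [Fintype n] [DecidableEq n]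

/-- The matrix `Q A Qᵀ`, where the rows of the orthogonal matrix `Q` are the vectors of `b`. -/
noncomputable def matrixConj (b : OrthonormalBasis ι ℝ (EuclideanSpace ℝ n)) :
    Matrix n n ℝ ≃ₐ[ℝ] Matrix ι ι ℝ :=
  (toLpLinAlgEquiv 2).trans (LinearMap.toMatrixAlgEquiv b.toBasis)

theorem matrixConj_apply (b : OrthonormalBasis ι ℝ (EuclideanSpace ℝ n)) (A : Matrix n n ℝ)
    (i j : ι) : b.matrixConj A i j = b i ⬝ᵥ A *ᵥ b j := by
  simp only [matrixConj, AlgEquiv.trans_apply, LinearMap.toMatrixAlgEquiv_apply,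
    OrthonormalBasis.coe_toBasis_repr_apply, OrthonormalBasis.repr_apply_apply,
    OrthonormalBasis.coe_toBasis, EuclideanSpace.inner_eq_star_dotProduct, star_trivial]
  exact dotProduct_comm _ _

theorem det_matrixConj (b : OrthonormalBasis ι ℝ (EuclideanSpace ℝ n)) (A : Matrix n n ℝ) :
    (b.matrixConj A).det = A.det := by
  change (LinearMap.toMatrix b.toBasis b.toBasis (toLpLin 2 2 A)).det = A.det
  rw [LinearMap.det_toMatrix, toLpLin_eq_toLin, LinearMap.det_toLin]

variable {p q : Type*} [Fintype p] [DecidableEq p] [Fintype q] [DecidableEq q]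

theorem matrixConj_eq_fromBlocks (b : OrthonormalBasis (p ⊕ q) ℝ (EuclideanSpace ℝ n))
    {S : Matrix n n ℝ} (hS : S.IsSymm) {γ : ℝ}
    (hγ : ∀ j, S *ᵥ b (.inr j) = γ • ⇑(b (.inr j))) :
    b.matrixConj S = fromBlocks (of fun i j => b (.inl i) ⬝ᵥ S *ᵥ b (.inl j)) 0 0 (γ • 1) := by
  have hb := EuclideanSpace.orthonormal_iff_dotProduct.mp b.orthonormal
  have hright (i : p ⊕ q) (j : q) :
      b.matrixConj S i (.inr j) = γ * if i = .inr j then 1 else 0 := by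
    rw [matrixConj_apply, hγ, dotProduct_smul, hb, smul_eq_mul]
  have hsymm (i j : p ⊕ q) : b.matrixConj S i j = b.matrixConj S j i := by
    rw [matrixConj_apply, matrixConj_apply, dotProduct_mulVec, ← mulVec_transpose, hS,
      dotProduct_comm]
  ext (i | i) (j | j)
  · exact matrixConj_apply ..
  · simp [hright]
  · simp [hsymm _ (.inl j), hright]
  · simp [hright, Matrix.one_apply]

theorem matrixConj_mul_mul_transpose_add_smul_one {r : Type*} [Fintype r]
    (b : OrthonormalBasis (p ⊕ q) ℝ (EuclideanSpace ℝ n)) {ξ : p → n → ℝ}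
    (hb : ∀ i, b (.inl i) = WithLp.toLp 2 (ξ i)) {U : Matrix n r ℝ} {M : Matrix r r ℝ}
    (hM : M.IsSymm) (γ : ℝ) (hU : ∀ a, U.col a ∈ Submodule.span ℝ (Set.range ξ)) :
    b.matrixConj (U * M * Uᵀ + γ • 1) =
      fromBlocks (of fun i j => ξ i ⬝ᵥ (U * M * Uᵀ + γ • 1) *ᵥ ξ j) 0 0 (γ • 1) := by
  have hS : (U * M * Uᵀ + γ • 1).IsSymm := by
    refine IsSymm.add ?_ (isSymm_one.smul γ)
    simp [IsSymm, transpose_mul, hM.eq, Matrix.mul_assoc]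
  have hperp (j : q) : ∀ u ∈ Set.range ξ, u ⬝ᵥ b (.inr j) = 0 := by
    rintro _ ⟨i, rfl⟩
    simpa [hb] using EuclideanSpace.orthonormal_iff_dotProduct.mp b.orthonormal (.inl i) (.inr j)
  rw [b.matrixConj_eq_fromBlocks hS fun j => mul_mul_transpose_add_smul_one_mulVec M γ
    (transpose_mulVec_eq_zero_of_col_mem_span hU (hperp j))]
  simp only [hb]

end OrthonormalBasis

/-- The FLG kernel can be computed in any orthonormal basis of the
subspace `W` spanned by the columns of the feature matrices `U₁, U₂`:
projecting `S₁, S₂` to `W` leaves the kernel value unchanged. -/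
theorem flg_kernel_subspace_projection {m n₁ n₂ p : ℕ}
    (U₁ : Matrix (Fin m) (Fin n₁) ℝ) (U₂ : Matrix (Fin m) (Fin n₂) ℝ)
    (L₁ : Matrix (Fin n₁) (Fin n₁) ℝ) (L₂ : Matrix (Fin n₂) (Fin n₂) ℝ)
    (hL₁ : L₁.PosDef) (hL₂ : L₂.PosDef)
    (γ : ℝ) (hγ : 0 < γ)
    (S₁ S₂ : Matrix (Fin m) (Fin m) ℝ)
    (hS₁ : S₁ = U₁ * L₁⁻¹ * U₁ᵀ + γ • (1 : Matrix (Fin m) (Fin m) ℝ))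
    (hS₂ : S₂ = U₂ * L₂⁻¹ * U₂ᵀ + γ • (1 : Matrix (Fin m) (Fin m) ℝ))
    (ξ : Fin p → (Fin m → ℝ))
    (hortho : ∀ i j, ξ i ⬝ᵥ ξ j = if i = j then (1 : ℝ) else 0)
    (hspan : Submodule.span ℝ (Set.range ξ) =
      Submodule.span ℝ
        ((Set.range fun j => fun i => U₁ i j) ∪
          (Set.range fun j => fun i => U₂ i j)))
    (Sbar₁ Sbar₂ : Matrix (Fin p) (Fin p) ℝ)
    (hbar₁ : ∀ i j, Sbar₁ i j = ξ i ⬝ᵥ S₁.mulVec (ξ j))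
    (hbar₂ : ∀ i j, Sbar₂ i j = ξ i ⬝ᵥ S₂.mulVec (ξ j)) :
    lgKernel S₁ S₂ = lgKernel Sbar₁ Sbar₂ := by
  have hξ : Orthonormal ℝ fun i => WithLp.toLp 2 (ξ i) :=
    EuclideanSpace.orthonormal_iff_dotProduct.mpr hortho
  obtain ⟨b, hb⟩ := hξ.exists_orthonormalBasis_sum_extension
  have hξ_indep : LinearIndependent ℝ ξ :=
    hξ.linearIndependent.map' (WithLp.linearEquiv 2 ℝ (Fin m → ℝ)).toLinearMap
      (LinearEquiv.ker _)
  have hcol₁ (a : Fin n₁) : U₁.col a ∈ Submodule.span ℝ (Set.range ξ) :=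
    hspan ▸ Submodule.subset_span (Or.inl ⟨a, rfl⟩)
  have hcol₂ (a : Fin n₂) : U₂.col a ∈ Submodule.span ℝ (Set.range ξ) :=
    hspan ▸ Submodule.subset_span (Or.inr ⟨a, rfl⟩)
  have hSbar₁ : Sbar₁ = of fun i j => ξ i ⬝ᵥ S₁ *ᵥ ξ j := Matrix.ext hbar₁
  have hSbar₂ : Sbar₂ = of fun i j => ξ i ⬝ᵥ S₂ *ᵥ ξ j := Matrix.ext hbar₂
  have hblock₁ : b.matrixConj S₁ = fromBlocks Sbar₁ 0 0 (γ • 1) := by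
    rw [hSbar₁, hS₁]
    exact b.matrixConj_mul_mul_transpose_add_smul_one hb
      (isHermitian_iff_isSymm.mp hL₁.inv.isHermitian) γ hcol₁
  have hblock₂ : b.matrixConj S₂ = fromBlocks Sbar₂ 0 0 (γ • 1) := by
    rw [hSbar₂, hS₂]
    exact b.matrixConj_mul_mul_transpose_add_smul_one hb
      (isHermitian_iff_isSymm.mp hL₂.inv.isHermitian) γ hcol₂
  have hSbar₁pos : Sbar₁.PosDef := by
    rw [hSbar₁, hS₁]
    exact (hL₁.mul_inv_mul_transpose_add_smul_one U₁ hγ).dotProduct_mulVec_of_linearIndependent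
      hξ_indep
  have hSbar₂pos : Sbar₂.PosDef := by
    rw [hSbar₂, hS₂]
    exact (hL₂.mul_inv_mul_transpose_add_smul_one U₂ hγ).dotProduct_mulVec_of_linearIndependent
      hξ_indep
  calc lgKernel S₁ S₂ = lgKernel (b.matrixConj S₁) (b.matrixConj S₂) :=
        (lgKernel_map _ b.det_matrixConj _ _).symm
    _ = lgKernel Sbar₁ Sbar₂ * lgKernel (γ • 1 : Matrix _ _ ℝ) (γ • 1) := by
        rw [hblock₁, hblock₂, lgKernel_fromBlocks hSbar₁pos hSbar₂pos (PosDef.one.smul hγ)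
          (PosDef.one.smul hγ)]
    _ = lgKernel Sbar₁ Sbar₂ := by rw [lgKernel_self (PosDef.one.smul hγ).det_pos, mul_one]
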